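/- Let s(v,w) = ξ·V(v)^{k1-1}(1-V(v))^{k3}/(1-V(v)·W(w)) + b1(v) where V' = ξ·V^{k1}(1-V)^{k3}, b1' = (1-k1)·ξ·V^{k1-2}(1-V)^{k3-1}·V', W depends only on w, 0 < V < 1, 0 < W < 1, V·W < 1, and k1 + k2 + k3 = 2. Then s satisfies the Riccati equation ∂s/∂v = s² + B2·s + B3, where B2 = -(k1·b1 + k2·b2 + k3·b3), B3 = (1-k1)·b2·b3 + (1-k2)·b1·b3 + (1-k3)·b1·b2, with b2 = b1 + ξ·V^{k1-1}(1-V)^{k3} and b3 = b1 + ξ·V^{k1-1}(1-V)^{k3-1}. -/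

import Mathlib

/-!
Write `P = ξ V^{k1-1} (1-V)^{k3}`, so that `V' = P V`, `b2 = b1 + P`, `b3 = b1 + P / (1 - V)` and
`s = P / (1 - V W) + b1`. The logarithmic derivative of `P` gives `P' = P² (k1 - 1 - k3 V / (1 - V))`,
and the equation for `b1` reads `b1' = (1 - k1) P² / (1 - V)`. Hence `∂s/∂v` is a rational expression
in `V`, `W`, `P`, `b1`, and the Riccati equation becomes a polynomial identity once `k2 = 2 - k1 - k3`.
-/

open Real

theorem HasDerivAt.rpow_mul_one_sub_rpow {f : ℝ → ℝ} {f' x : ℝ} (a c : ℝ) (hf : HasDerivAt f f' x)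
    (h0 : f x ≠ 0) (h1 : 1 - f x ≠ 0) :
    HasDerivAt (fun y => f y ^ a * (1 - f y) ^ c)
      (f' * (f x ^ a * (1 - f x) ^ c) * (a / f x - c / (1 - f x))) x := by
  refine ((hf.rpow_const (p := a) (Or.inl h0)).mul
    ((hf.const_sub 1).rpow_const (p := c) (Or.inl h1))).congr_deriv ?_
  rw [rpow_sub_one h0, rpow_sub_one h1]
  field_simp
  ring

section

variable {ξ k1 k3 x : ℝ}

theorem rpow_mul_one_sub_rpow_eq_mul (hx : x ≠ 0) :
    ξ * x ^ k1 * (1 - x) ^ k3 = ξ * x ^ (k1 - 1) * (1 - x) ^ k3 * x := by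
  rw [rpow_sub_one hx]
  field_simp

theorem rpow_sub_one_eq_div (h1 : 1 - x ≠ 0) :
    ξ * x ^ (k1 - 1) * (1 - x) ^ (k3 - 1) = ξ * x ^ (k1 - 1) * (1 - x) ^ k3 / (1 - x) := by
  rw [rpow_sub_one h1, mul_div_assoc]

theorem rpow_sub_two_mul_rpow_eq_sq_div (hx : x ≠ 0) (h1 : 1 - x ≠ 0) :
    ξ * x ^ (k1 - 2) * (1 - x) ^ (k3 - 1) * (ξ * x ^ k1 * (1 - x) ^ k3) =
      (ξ * x ^ (k1 - 1) * (1 - x) ^ k3) ^ 2 / (1 - x) := by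
  rw [show k1 - 2 = k1 - 1 - 1 by ring, rpow_sub_one hx, rpow_sub_one h1, rpow_sub_one hx]
  field_simp

theorem hasDerivAt_mul_rpow_sub_one_mul_one_sub_rpow {V : ℝ → ℝ} {v : ℝ}
    (hV : HasDerivAt V (ξ * V v ^ (k1 - 1) * (1 - V v) ^ k3 * V v) v) (h0 : V v ≠ 0)
    (h1 : 1 - V v ≠ 0) :
    HasDerivAt (fun v => ξ * V v ^ (k1 - 1) * (1 - V v) ^ k3)
      ((ξ * V v ^ (k1 - 1) * (1 - V v) ^ k3) ^ 2 * (k1 - 1 - k3 * V v / (1 - V v))) v := by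
  have h := (hV.rpow_mul_one_sub_rpow (k1 - 1) k3 h0 h1).const_mul ξ
  simp only [← mul_assoc] at h
  refine h.congr_deriv ?_
  field_simp

end

theorem riccati_identity {k1 k2 k3 : ℝ} (hk : k1 + k2 + k3 = 2) {u w P b : ℝ}
    (h1 : 1 - u ≠ 0) (hD : 1 - u * w ≠ 0) :
    (P ^ 2 * (k1 - 1 - k3 * u / (1 - u)) * (1 - u * w) - P * -(P * u * w)) / (1 - u * w) ^ 2
        + (1 - k1) * (P ^ 2 / (1 - u)) =
      (P / (1 - u * w) + b) ^ 2
        + (-(k1 * b + k2 * (b + P) + k3 * (b + P / (1 - u)))) * (P / (1 - u * w) + b)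
        + ((1 - k1) * (b + P) * (b + P / (1 - u)) + (1 - k2) * b * (b + P / (1 - u))
          + (1 - k3) * b * (b + P)) := by
  obtain rfl : k2 = 2 - k1 - k3 := by linarith
  field_simp
  ring

theorem stmt8_general (ξ k1 k2 k3 : ℝ) (hk : k1 + k2 + k3 = 2)
    (V : ℝ → ℝ) (hV : Differentiable ℝ V)
    (hV01 : ∀ v, 0 < V v ∧ V v < 1)
    (hode : ∀ v, deriv V v = ξ * V v ^ k1 * (1 - V v) ^ k3)
    (b1 : ℝ → ℝ) (hb1 : Differentiable ℝ b1)
    (hb1' : ∀ v, deriv b1 v = (1 - k1) * ξ * V v ^ (k1 - 2) * (1 - V v) ^ (k3 - 1) * deriv V v)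
    (W : ℝ → ℝ)
    (hVW : ∀ v w, V v * W w < 1) :
    ∀ w v,
      deriv (fun v => ξ * V v ^ (k1 - 1) * (1 - V v) ^ k3 / (1 - V v * W w) + b1 v) v =
        (ξ * V v ^ (k1 - 1) * (1 - V v) ^ k3 / (1 - V v * W w) + b1 v) ^ 2
        + (-(k1 * b1 v
              + k2 * (b1 v + ξ * V v ^ (k1 - 1) * (1 - V v) ^ k3)
              + k3 * (b1 v + ξ * V v ^ (k1 - 1) * (1 - V v) ^ (k3 - 1)))) *
            (ξ * V v ^ (k1 - 1) * (1 - V v) ^ k3 / (1 - V v * W w) + b1 v)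
        + ((1 - k1) * (b1 v + ξ * V v ^ (k1 - 1) * (1 - V v) ^ k3) *
              (b1 v + ξ * V v ^ (k1 - 1) * (1 - V v) ^ (k3 - 1))
            + (1 - k2) * b1 v * (b1 v + ξ * V v ^ (k1 - 1) * (1 - V v) ^ (k3 - 1))
            + (1 - k3) * b1 v * (b1 v + ξ * V v ^ (k1 - 1) * (1 - V v) ^ k3)) := by
  intro w v
  have h0 : V v ≠ 0 := (hV01 v).1.ne'
  have h1 : 1 - V v ≠ 0 := (sub_pos.mpr (hV01 v).2).ne'
  have hD : 1 - V v * W w ≠ 0 := (sub_pos.mpr (hVW v w)).ne'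
  have hV' : HasDerivAt V (ξ * V v ^ (k1 - 1) * (1 - V v) ^ k3 * V v) v :=
    (hV v).hasDerivAt.congr_deriv (by rw [hode, rpow_mul_one_sub_rpow_eq_mul h0])
  have hb1v : HasDerivAt b1
      ((1 - k1) * ((ξ * V v ^ (k1 - 1) * (1 - V v) ^ k3) ^ 2 / (1 - V v))) v :=
    (hb1 v).hasDerivAt.congr_deriv <| by
      rw [hb1', hode, ← rpow_sub_two_mul_rpow_eq_sq_div h0 h1]
      ring
  have hP := hasDerivAt_mul_rpow_sub_one_mul_one_sub_rpow hV' h0 h1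
  have hs := (hP.div ((hV'.mul_const (W w)).const_sub 1) hD).add hb1v
  refine hs.deriv.trans ?_
  rw [rpow_sub_one_eq_div h1]
  exact riccati_identity hk h1 hD

theorem stmt8 (ξ k1 k2 k3 : ℝ) (hξ : ξ ≠ 0) (hk : k1 + k2 + k3 = 2)
    (V : ℝ → ℝ) (hV : Differentiable ℝ V)
    (hV01 : ∀ v, 0 < V v ∧ V v < 1)
    (hode : ∀ v, deriv V v = ξ * V v ^ k1 * (1 - V v) ^ k3)
    (b1 : ℝ → ℝ) (hb1 : Differentiable ℝ b1)
    (hb1' : ∀ v, deriv b1 v = (1 - k1) * ξ * V v ^ (k1 - 2) * (1 - V v) ^ (k3 - 1) * deriv V v)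
    (W : ℝ → ℝ) (hW01 : ∀ w, 0 < W w ∧ W w < 1)
    (hVW : ∀ v w, V v * W w < 1) :
    ∀ w v,
      deriv (fun v => ξ * V v ^ (k1 - 1) * (1 - V v) ^ k3 / (1 - V v * W w) + b1 v) v =
        (ξ * V v ^ (k1 - 1) * (1 - V v) ^ k3 / (1 - V v * W w) + b1 v) ^ 2
        + (-(k1 * b1 v
              + k2 * (b1 v + ξ * V v ^ (k1 - 1) * (1 - V v) ^ k3)
              + k3 * (b1 v + ξ * V v ^ (k1 - 1) * (1 - V v) ^ (k3 - 1)))) *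
            (ξ * V v ^ (k1 - 1) * (1 - V v) ^ k3 / (1 - V v * W w) + b1 v)
        + ((1 - k1) * (b1 v + ξ * V v ^ (k1 - 1) * (1 - V v) ^ k3) *
              (b1 v + ξ * V v ^ (k1 - 1) * (1 - V v) ^ (k3 - 1))
            + (1 - k2) * b1 v * (b1 v + ξ * V v ^ (k1 - 1) * (1 - V v) ^ (k3 - 1))
            + (1 - k3) * b1 v * (b1 v + ξ * V v ^ (k1 - 1) * (1 - V v) ^ k3)) :=
  stmt8_general ξ k1 k2 k3 hk V hV hV01 hode b1 hb1 hb1' W hVW
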